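/- Let w = w_1…w_n be a pin word with n ≥ 2 and let (p_0,p_1,…,p_n) be a pin sequence whose associated pin word is w. Then for every i ∈ {2,…,n}, the point p_i lies in exactly one quadrant of the bounding box of {p_0,…,p_{i−2}}, and the numeral of this quadrant equals: w_i, if w_i is a numeral; φ⁻¹(w_{i−1}w_i), if w_{i−1} and w_i are both directions; and φ⁻¹(BC), where φ(w_{i−1}w_i) = ABC, if w_{i−1} is a numeral and w_i is a direction. -/
import Mathlib


namespace PinStmt

abbrev Point : Type := ℝ × ℝ

inductive Letter : Type
  | n1 | n2 | n3 | n4 | U | D | L | R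
deriving DecidableEq

def Letter.isNum : Letter → Bool
  | .n1 | .n2 | .n3 | .n4 => true
  | _ => false

/-- `c` is one of the numeral letters 1,2,3,4. -/
def Letter.IsNumeral (c : Letter) : Prop := c.isNum = true

/-- `c` is one of the direction letters U,D,L,R. -/
def Letter.IsDirection (c : Letter) : Prop := c.isNum = false

/-- `q i` lies strictly above all of `q 0, …, q (i-1)`. -/
def AboveAll (q : ℕ → Point) (i : ℕ) : Prop := ∀ j < i, (q j).2 < (q i).2
def BelowAll (q : ℕ → Point) (i : ℕ) : Prop := ∀ j < i, (q i).2 < (q j).2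
def RightAll (q : ℕ → Point) (i : ℕ) : Prop := ∀ j < i, (q j).1 < (q i).1
def LeftAll  (q : ℕ → Point) (i : ℕ) : Prop := ∀ j < i, (q i).1 < (q j).1

/-- The vertical line through `q i` strictly separates `q (i-1)` from `{q j | j < i-1}`. -/
def VLineSep (q : ℕ → Point) (i : ℕ) : Prop :=
  ((q (i - 1)).1 < (q i).1 ∧ ∀ j < i - 1, (q i).1 < (q j).1) ∨
  ((q i).1 < (q (i - 1)).1 ∧ ∀ j < i - 1, (q j).1 < (q i).1)

/-- The horizontal line through `q i` strictly separates `q (i-1)` from `{q j | j < i-1}`. -/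
def HLineSep (q : ℕ → Point) (i : ℕ) : Prop :=
  ((q (i - 1)).2 < (q i).2 ∧ ∀ j < i - 1, (q i).2 < (q j).2) ∨
  ((q i).2 < (q (i - 1)).2 ∧ ∀ j < i - 1, (q j).2 < (q i).2)

/-- Separation condition for the pin `q i`. -/
def SepCond (q : ℕ → Point) (i : ℕ) : Prop := VLineSep q i ∨ HLineSep q i

/-- Independence condition: neither line through `q i` splits `{q j | j < i}` in two
nonempty parts. -/
def IndepCond (q : ℕ → Point) (i : ℕ) : Prop :=
  ¬((∃ j < i, (q j).1 < (q i).1) ∧ (∃ j < i, (q i).1 < (q j).1)) ∧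
  ¬((∃ j < i, (q j).2 < (q i).2) ∧ (∃ j < i, (q i).2 < (q j).2))

/-- `q i` lies outside the bounding box of `{q j | j < i}`. -/
def OutsideBox (q : ℕ → Point) (i : ℕ) : Prop :=
  RightAll q i ∨ LeftAll q i ∨ AboveAll q i ∨ BelowAll q i

/-- `(q 0, …, q (m-1))` is a pin sequence. -/
def IsPinSeq (q : ℕ → Point) (m : ℕ) : Prop :=
  (∀ i < m, ∀ j < m, i ≠ j → (q i).1 ≠ (q j).1 ∧ (q i).2 ≠ (q j).2) ∧
  (∀ i, 1 ≤ i → i < m → OutsideBox q i ∧ (SepCond q i ∨ IndepCond q i))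

/-- `(p 0, …, p (n-1))` is a pin representation of `σ`, where `f` sends the time index of a
pin to the position (index) of the corresponding point in the diagram of `σ`. -/
def IsPinReprWith {n : ℕ} (σ : Equiv.Perm (Fin n)) (p : ℕ → Point)
    (f : Fin n ≃ Fin n) : Prop :=
  IsPinSeq p n ∧ ∀ j k : Fin n,
    ((p j.val).1 < (p k.val).1 ↔ f j < f k) ∧
    ((p j.val).2 < (p k.val).2 ↔ σ (f j) < σ (f k))

def IsPinRepr {n : ℕ} (σ : Equiv.Perm (Fin n)) (p : ℕ → Point) : Prop :=
  ∃ f, IsPinReprWith σ p f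

/-- `σ` is a pin-permutation. -/
def IsPinPerm {n : ℕ} (σ : Equiv.Perm (Fin n)) : Prop := ∃ p, IsPinRepr σ p

/-- Prepend the origin `p0` to the sequence of pins `p`. -/
def withOrigin (p0 : Point) (p : ℕ → Point) : ℕ → Point
  | 0 => p0
  | i + 1 => p i

/-- The letter encoding the pin `q i` (where `q 0` is the origin). -/
def LetterIs (q : ℕ → Point) (i : ℕ) : Letter → Prop
  | .U => 2 ≤ i ∧ SepCond q i ∧ AboveAll q i
  | .D => 2 ≤ i ∧ SepCond q i ∧ BelowAll q i
  | .L => 2 ≤ i ∧ SepCond q i ∧ LeftAll q i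
  | .R => 2 ≤ i ∧ SepCond q i ∧ RightAll q i
  | .n1 => IndepCond q i ∧ RightAll q i ∧ AboveAll q i
  | .n2 => IndepCond q i ∧ LeftAll q i ∧ AboveAll q i
  | .n3 => IndepCond q i ∧ LeftAll q i ∧ BelowAll q i
  | .n4 => IndepCond q i ∧ RightAll q i ∧ BelowAll q i

/-- `w` is the pin word associated with the pin sequence `(q 0, q 1, …, q n)`,
whose origin is `q 0`. -/
def WordOf (q : ℕ → Point) (n : ℕ) (w : List Letter) : Prop :=
  w.length = n ∧ ∀ i < n, LetterIs q (i + 1) (w.getD i Letter.U)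

/-- `P(σ)`: the set of pin words of the permutation `σ`. -/
def PinWords {n : ℕ} (σ : Equiv.Perm (Fin n)) : Set (List Letter) :=
  { w | ∃ (p : ℕ → Point) (p0 : Point), IsPinRepr σ p ∧
        IsPinSeq (withOrigin p0 p) (n + 1) ∧ WordOf (withOrigin p0 p) n w }

/-- The set of pin words associated with the fixed pin representation `p`
over all admissible origins. -/
def WordsOfRepr (n : ℕ) (p : ℕ → Point) : Set (List Letter) :=
  { w | ∃ p0 : Point, IsPinSeq (withOrigin p0 p) (n + 1) ∧ WordOf (withOrigin p0 p) n w }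

/-- `(p 0, …, p (n-1))` is a proper pin sequence: every pin from the third one on
satisfies the separation condition. -/
def IsProperSeq (p : ℕ → Point) (n : ℕ) : Prop :=
  IsPinSeq p n ∧ ∀ i, 2 ≤ i → i < n → SepCond p i

/-- `σ` is a proper pin-permutation. -/
def IsProperPinPerm {n : ℕ} (σ : Equiv.Perm (Fin n)) : Prop :=
  ∃ p, IsPinRepr σ p ∧ IsProperSeq p n

/-- A strict pin word: a numeral followed only by directions. -/
def IsStrict (w : List Letter) : Prop :=
  ∃ c cs, w = c :: cs ∧ c.IsNumeral ∧ ∀ d ∈ cs, d.IsDirection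

/-- A quasi-strict pin word: two numerals followed only by directions. -/
def IsQuasiStrict (w : List Letter) : Prop :=
  ∃ c₁ c₂ cs, w = c₁ :: c₂ :: cs ∧ c₁.IsNumeral ∧ c₂.IsNumeral ∧ ∀ d ∈ cs, d.IsDirection

/-- `w` is a pin word (of some permutation). -/
def IsPinWord (w : List Letter) : Prop :=
  ∃ (n : ℕ) (σ : Equiv.Perm (Fin n)), w ∈ PinWords σ

/-- `SP`: the set of strict pin words. -/
def SPset : Set (List Letter) := { w | IsPinWord w ∧ IsStrict w }

def phi2 : Letter → Letter → List Letter
  | .n1, .R => [.R, .U, .R]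
  | .n2, .R => [.L, .U, .R]
  | .n3, .R => [.L, .D, .R]
  | .n4, .R => [.R, .D, .R]
  | .n1, .L => [.R, .U, .L]
  | .n2, .L => [.L, .U, .L]
  | .n3, .L => [.L, .D, .L]
  | .n4, .L => [.R, .D, .L]
  | .n1, .U => [.U, .R, .U]
  | .n2, .U => [.U, .L, .U]
  | .n3, .U => [.D, .L, .U]
  | .n4, .U => [.D, .R, .U]
  | .n1, .D => [.U, .R, .D]
  | .n2, .D => [.U, .L, .D]
  | .n3, .D => [.D, .L, .D]
  | .n4, .D => [.D, .R, .D]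
  | _, _ => []

def phi1 : Letter → Set (List Letter)
  | .n1 => {[.U, .R], [.R, .U]}
  | .n2 => {[.U, .L], [.L, .U]}
  | .n3 => {[.D, .L], [.L, .D]}
  | .n4 => {[.R, .D], [.D, .R]}
  | _ => ∅

def phiInv2 : Letter → Letter → Letter
  | .U, .R => .n1
  | .R, .U => .n1
  | .U, .L => .n2
  | .L, .U => .n2
  | .D, .L => .n3
  | .L, .D => .n3
  | .R, .D => .n4
  | .D, .R => .n4
  | _, _ => .n1

/-- `φ(u)`, as a set of words: a two-element set when `u` is a single numeral,
a singleton `{φ(u)}` when `u` is a strict pin word of length at least 2, and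
the identity (as a singleton) on words of `M`. -/
def phiSet : List Letter → Set (List Letter)
  | [] => {[]}
  | [c] => if c.isNum then phi1 c else {[c]}
  | c :: d :: rest => if c.isNum then {phi2 c d ++ rest} else {c :: d :: rest}

/-- The quadrant numeral `q(c,d)`. -/
def quadNum (c d : Letter) : Letter :=
  if c.isNum then
    match phi2 c d with
    | [_, b, e] => phiInv2 b e
    | _ => Letter.n1
  else phiInv2 c d

/-- `us` is the strong numeral-led factor decomposition of `u`. -/
def IsSNLD (u : List Letter) (us : List (List Letter)) : Prop :=
  us.flatten = u ∧ ∀ v ∈ us, IsStrict v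

def interleave : List (List Letter) → List (List Letter) → List Letter
  | [], _ => []
  | v :: vs, [] => v ++ interleave vs []
  | v :: vs, w :: ws => v ++ w ++ interleave vs ws

/-- The condition on the pieces `v^(i)`, `w^(i)`, `u^(i)` in the definition of `≼`. -/
def PieceCond (v wi ui : List Letter) : Prop :=
  (∃ c cs, wi = c :: cs ∧ c.IsNumeral ∧ wi = ui) ∨
  (∃ d ds c, wi = d :: ds ∧ d.IsDirection ∧ v ≠ [] ∧ v.getLast? = some c ∧
    ui = quadNum c d :: ds)

/-- The order `u ≼ w` on pin words. -/
def PinOrder (u w : List Letter) : Prop :=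
  ∃ us, IsSNLD u us ∧
    ∃ vs ws : List (List Letter), ws.length = us.length ∧ vs.length = us.length + 1 ∧
      w = interleave vs ws ∧
      ∀ i < us.length, PieceCond (vs.getD i []) (ws.getD i []) (us.getD i [])

def IsVert (c : Letter) : Prop := c = Letter.U ∨ c = Letter.D
def IsHoriz (c : Letter) : Prop := c = Letter.L ∨ c = Letter.R

/-- `M`: words over `{U,D,L,R}` of length at least 2 with no factor in
`{UU,UD,DU,DD,LL,LR,RL,RR}`. -/
def MSet : Set (List Letter) :=
  { w | 2 ≤ w.length ∧ (∀ c ∈ w, c.IsDirection) ∧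
        ∀ a c : Letter, [a, c] <:+: w →
          ¬(IsVert a ∧ IsVert c) ∧ ¬(IsHoriz a ∧ IsHoriz c) }

/-- `A*`: all words over the direction alphabet `A = {U,D,L,R}`. -/
def Astar : Set (List Letter) := { w | ∀ c ∈ w, c.IsDirection }

/-- Concatenation of languages. -/
def LMul (X Y : Set (List Letter)) : Set (List Letter) :=
  { w | ∃ x ∈ X, ∃ y ∈ Y, w = x ++ y }

/-- The language `L(u) = A* φ(u^(1)) A* φ(u^(2)) … A* φ(u^(j)) A*`. -/
def LangOf (u : List Letter) : Set (List Letter) :=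
  { m | ∃ us, IsSNLD u us ∧
      ∃ vs ws : List (List Letter), ws.length = us.length ∧ vs.length = us.length + 1 ∧
        m = interleave vs ws ∧ (∀ v ∈ vs, v ∈ Astar) ∧
        ∀ i < us.length, ws.getD i [] ∈ phiSet (us.getD i []) }

/-- The language `L_π = ⋃_{u ∈ P(π)} L(u)`. -/
def Lperm {n : ℕ} (π : Equiv.Perm (Fin n)) : Set (List Letter) :=
  { m | ∃ u ∈ PinWords π, m ∈ LangOf u }

/-- `π ≤ σ`: the permutation `π` is a pattern of the permutation `σ`. -/
def IsPattern {k n : ℕ} (π : Equiv.Perm (Fin k)) (σ : Equiv.Perm (Fin n)) : Prop :=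
  ∃ g : Fin k → Fin n, StrictMono g ∧ ∀ a b : Fin k, (π a < π b ↔ σ (g a) < σ (g b))

/-- `q i` lies in the quadrant (given by a numeral letter) of the bounding box of
`{q j | j < m}`. -/
def InQuadOf (q : ℕ → Point) (i m : ℕ) : Letter → Prop
  | .n1 => (∀ j < m, (q j).1 < (q i).1) ∧ (∀ j < m, (q j).2 < (q i).2)
  | .n2 => (∀ j < m, (q i).1 < (q j).1) ∧ (∀ j < m, (q j).2 < (q i).2)
  | .n3 => (∀ j < m, (q i).1 < (q j).1) ∧ (∀ j < m, (q i).2 < (q j).2)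
  | .n4 => (∀ j < m, (q j).1 < (q i).1) ∧ (∀ j < m, (q i).2 < (q j).2)
  | _ => False


/-- `σ = ⊕[π_0, …, π_(r-1)]` where the `k`-th child occupies positions and values
`[b k, b (k+1))`. -/
def SumDecomp {n : ℕ} (σ : Equiv.Perm (Fin n)) (r : ℕ) (b : ℕ → ℕ) : Prop :=
  b 0 = 0 ∧ b r = n ∧ (∀ k < r, b k < b (k + 1)) ∧
  ∀ k < r, ∀ i : Fin n, b k ≤ i.val → i.val < b (k + 1) →
    b k ≤ (σ i).val ∧ (σ i).val < b (k + 1)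

/-- The child of `σ` occupying positions `[lo, hi)` is ⊕-indecomposable. -/
def ChildIndecomp {n : ℕ} (σ : Equiv.Perm (Fin n)) (lo hi : ℕ) : Prop :=
  ¬ ∃ m, lo < m ∧ m < hi ∧ ∀ i : Fin n, lo ≤ i.val → i.val < m → (σ i).val < m

/-- The pin read at time `a` belongs to the `k`-th child (`f` sends times to positions). -/
def PinInChild {n : ℕ} (b : ℕ → ℕ) (f : Fin n ≃ Fin n) (a : Fin n) (k : ℕ) : Prop :=
  b k ≤ (f a).val ∧ (f a).val < b (k + 1)

/-- The set of (times of) pins belonging to the `k`-th child. -/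
def ChildPins {n : ℕ} (b : ℕ → ℕ) (f : Fin n ≃ Fin n) (k : ℕ) : Set (Fin n) :=
  { a | PinInChild b f a k }

/-- The starting times of the maximal runs of consecutive reading times in `S`. -/
def PieceStarts {n : ℕ} (S : Set (Fin n)) : Set (Fin n) :=
  { a | a ∈ S ∧ ∀ c : Fin n, c.val + 1 = a.val → c ∉ S }

/-- `S` is read in exactly `k` pieces. -/
def ReadInPieces {n : ℕ} (S : Set (Fin n)) (k : ℕ) : Prop := (PieceStarts S).ncard = k

/-- The pins of `D` are all read before the pins of `C`. -/
def ReadBefore {n : ℕ} (D C : Set (Fin n)) : Prop := ∀ a ∈ D, ∀ c ∈ C, a < c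

/-- The infinite oscillating sequence `ω = 3 1 5 2 7 4 9 6 …` (1-indexed). -/
def omegaSeq (i : ℕ) : ℕ := if i = 2 then 1 else if i % 2 = 1 then i + 2 else i - 2

/-- `π` is a pattern of some prefix of the infinite oscillating sequence `ω`. -/
def IsOmegaPattern {k : ℕ} (π : Equiv.Perm (Fin k)) : Prop :=
  ∃ g : Fin k → ℕ, StrictMono g ∧ (∀ a, 1 ≤ g a) ∧
    ∀ a b : Fin k, (π a < π b ↔ omegaSeq (g a) < omegaSeq (g b))

/-- The interval of positions `[lo, lo+len)` is a block of `σ`. -/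
def IsBlockOf {n : ℕ} (σ : Equiv.Perm (Fin n)) (lo len : ℕ) : Prop :=
  lo + len ≤ n ∧ ∃ vlo, ∀ i : Fin n,
    (lo ≤ i.val ∧ i.val < lo + len) ↔ (vlo ≤ (σ i).val ∧ (σ i).val < vlo + len)

/-- `σ` is a simple permutation. -/
def IsSimplePerm {n : ℕ} (σ : Equiv.Perm (Fin n)) : Prop :=
  4 ≤ n ∧ ∀ lo len, IsBlockOf σ lo len → len ≤ 1 ∨ len = n

/-- `π` is the permutation whose one-line notation is the list `l`. -/
def PermMatches {k : ℕ} (π : Equiv.Perm (Fin k)) (l : List ℕ) : Prop :=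
  l.length = k ∧ ∀ i : Fin k, (π i).val + 1 = l.getD i.val 0

/-- `ξ` is an increasing oscillation. -/
def IsIncrOsc {k : ℕ} (ξ : Equiv.Perm (Fin k)) : Prop :=
  PermMatches ξ [1] ∨ PermMatches ξ [2, 1] ∨ PermMatches ξ [2, 3, 1] ∨
  PermMatches ξ [3, 1, 2] ∨ (4 ≤ k ∧ IsSimplePerm ξ ∧ IsOmegaPattern ξ)

/-- The child of `σ` occupying positions `[lo, hi)` is order-isomorphic to `ξ`. -/
def ChildIsPerm {n m : ℕ} (σ : Equiv.Perm (Fin n)) (lo hi : ℕ)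
    (ξ : Equiv.Perm (Fin m)) : Prop :=
  lo + m = hi ∧ ∀ (a c : Fin m) (ia ic : Fin n), ia.val = lo + a.val → ic.val = lo + c.val →
    ((σ ia).val < (σ ic).val ↔ (ξ a).val < (ξ c).val)

/-- The child of `σ` occupying positions `[lo, hi)` is an increasing oscillation. -/
def ChildIsIncrOsc {n : ℕ} (σ : Equiv.Perm (Fin n)) (lo hi : ℕ) : Prop :=
  ∃ (m : ℕ) (ξ : Equiv.Perm (Fin m)), IsIncrOsc ξ ∧ ChildIsPerm σ lo hi ξ

/-- `τ = ⊕[ξ, η]`. -/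
def IsDSum2 {m k l : ℕ} (τ : Equiv.Perm (Fin m)) (ξ : Equiv.Perm (Fin k))
    (η : Equiv.Perm (Fin l)) : Prop :=
  m = k + l ∧ (∀ i : Fin m, i.val < k → (τ i).val < k) ∧
    ChildIsPerm τ 0 k ξ ∧ ChildIsPerm τ k m η

/-- The origin `p0` lies in quadrant 1 of the bounding box of `{p j | j < n}`. -/
def OriginQ1 (p0 : Point) (p : ℕ → Point) (n : ℕ) : Prop :=
  ∀ j < n, (p j).1 < p0.1 ∧ (p j).2 < p0.2

/-- The origin `p0` lies in quadrant 3 of the bounding box of `{p j | j < n}`. -/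
def OriginQ3 (p0 : Point) (p : ℕ → Point) (n : ℕ) : Prop :=
  ∀ j < n, p0.1 < (p j).1 ∧ p0.2 < (p j).2

/-- `P^(1)(ξ)`: pin words of `ξ` whose origin lies in quadrant 1 w.r.t. the points of `ξ`. -/
def PinWordsQ1 {n : ℕ} (ξ : Equiv.Perm (Fin n)) : Set (List Letter) :=
  { w | ∃ (p : ℕ → Point) (p0 : Point), IsPinRepr ξ p ∧
        IsPinSeq (withOrigin p0 p) (n + 1) ∧ WordOf (withOrigin p0 p) n w ∧ OriginQ1 p0 p n }

/-- `P^(3)(ξ)`: pin words of `ξ` whose origin lies in quadrant 3 w.r.t. the points of `ξ`. -/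
def PinWordsQ3 {n : ℕ} (ξ : Equiv.Perm (Fin n)) : Set (List Letter) :=
  { w | ∃ (p : ℕ → Point) (p0 : Point), IsPinRepr ξ p ∧
        IsPinSeq (withOrigin p0 p) (n + 1) ∧ WordOf (withOrigin p0 p) n w ∧ OriginQ3 p0 p n }

/-- The shuffle product of two sequences of sets of words. -/
def ShuffleSeq : List (Set (List Letter)) → List (Set (List Letter)) → Set (List Letter)
  | [], [] => {[]}
  | X :: As, [] => { w | ∃ x ∈ X, ∃ t ∈ ShuffleSeq As [], w = x ++ t }
  | [], Y :: Bs => { w | ∃ y ∈ Y, ∃ t ∈ ShuffleSeq ([] : List (Set (List Letter))) Bs, w = y ++ t }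
  | X :: As, Y :: Bs =>
      { w | (∃ x ∈ X, ∃ t ∈ ShuffleSeq As (Y :: Bs), w = x ++ t) ∨
            (∃ y ∈ Y, ∃ t ∈ ShuffleSeq (X :: As) Bs, w = y ++ t) }
  termination_by A B => A.length + B.length

/-- The `p`-fold repetition `x^p` of the word `x`. -/
def repW (p : ℕ) (x : List Letter) : List Letter := (List.replicate p x).flatten

/-- The points of `ξ` at positions `i` and `j` form an active knight of `ξ`:
they occur (in some order) as the first two pins of some pin representation of `ξ`. -/
def ActiveKnight {k : ℕ} (ξ : Equiv.Perm (Fin k)) (i j : Fin k) : Prop :=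
  ∃ (p : ℕ → Point) (f : Fin k ≃ Fin k) (h2 : 2 ≤ k),
    IsPinReprWith ξ p f ∧
    ((f ⟨0, by omega⟩ = i ∧ f ⟨1, by omega⟩ = j) ∨
     (f ⟨0, by omega⟩ = j ∧ f ⟨1, by omega⟩ = i))

/-- The points at positions `i`, `j` are in horizontal knight position. -/
def KnightH {k : ℕ} (ξ : Equiv.Perm (Fin k)) (i j : Fin k) : Prop :=
  (i.val + 2 = j.val ∨ j.val + 2 = i.val) ∧
  ((ξ i).val + 1 = (ξ j).val ∨ (ξ j).val + 1 = (ξ i).val)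

/-- The points at positions `i`, `j` are in vertical knight position. -/
def KnightV {k : ℕ} (ξ : Equiv.Perm (Fin k)) (i j : Fin k) : Prop :=
  (i.val + 1 = j.val ∨ j.val + 1 = i.val) ∧
  ((ξ i).val + 2 = (ξ j).val ∨ (ξ j).val + 2 = (ξ i).val)

inductive KType : Type
  | H | V

def KnightOfType {k : ℕ} (t : KType) (ξ : Equiv.Perm (Fin k)) (i j : Fin k) : Prop :=
  match t with
  | .H => KnightH ξ i j
  | .V => KnightV ξ i j

/-- The increasing oscillation `ξ` has type `(x, y)`: its lower-left active knight
(the one containing the leftmost point) has knight-position type `x` and its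
upper-right active knight (the one containing the rightmost point) has type `y`. -/
def HasOscType {k : ℕ} (ξ : Equiv.Perm (Fin k)) (x y : KType) : Prop :=
  ∃ i j i' j' : Fin k, ActiveKnight ξ i j ∧ ActiveKnight ξ i' j' ∧
    i.val = 0 ∧ j'.val + 1 = k ∧ KnightOfType x ξ i j ∧ KnightOfType y ξ i' j'

/-- The permutation 21. -/
def perm21 : Equiv.Perm (Fin 2) := Equiv.swap 0 1

/-- The permutation 12. -/
def perm12 : Equiv.Perm (Fin 2) := Equiv.refl (Fin 2)

def EndsH (w : List Letter) : Prop := w.getLast? = some Letter.R ∨ w.getLast? = some Letter.L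
def EndsV (w : List Letter) : Prop := w.getLast? = some Letter.U ∨ w.getLast? = some Letter.D

/-- `Q⁻`: quasi-strict pin words of 21. -/
def Qminus : Set (List Letter) := { w | w ∈ PinWords perm21 ∧ IsQuasiStrict w }
/-- `S⁻_H`: strict pin words of 21 ending with R or L. -/
def SminusH : Set (List Letter) := { w | w ∈ PinWords perm21 ∧ IsStrict w ∧ EndsH w }
/-- `S⁻_V`: strict pin words of 21 ending with U or D. -/
def SminusV : Set (List Letter) := { w | w ∈ PinWords perm21 ∧ IsStrict w ∧ EndsV w }
/-- `Q⁺`: quasi-strict pin words of 12. -/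
def Qplus : Set (List Letter) := { w | w ∈ PinWords perm12 ∧ IsQuasiStrict w }
/-- `S⁺_H`: strict pin words of 12 ending with R or L. -/
def SplusH : Set (List Letter) := { w | w ∈ PinWords perm12 ∧ IsStrict w ∧ EndsH w }
/-- `S⁺_V`: strict pin words of 12 ending with U or D. -/
def SplusV : Set (List Letter) := { w | w ∈ PinWords perm12 ∧ IsStrict w ∧ EndsV w }

/-- `P^mix(ξ_i, ξ_j)` for `τ = ⊕[ξ_i, ξ_j]` with `|ξ_i| = s1`: pin words associated
with a pin representation of `τ` reading one of the two children in two pieces. -/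
def Pmix {m : ℕ} (τ : Equiv.Perm (Fin m)) (s1 : ℕ) : Set (List Letter) :=
  { w | ∃ (p : ℕ → Point) (p0 : Point) (f : Fin m ≃ Fin m),
      IsPinReprWith τ p f ∧ IsPinSeq (withOrigin p0 p) (m + 1) ∧
      WordOf (withOrigin p0 p) m w ∧
      (ReadInPieces { a : Fin m | (f a).val < s1 } 2 ∨
       ReadInPieces { a : Fin m | s1 ≤ (f a).val } 2) }

/-- The set of words `{13, 23, 33, 43, 1D, 4D}`. -/
def W13D : Set (List Letter) :=
  {[Letter.n1, Letter.n3], [Letter.n2, Letter.n3], [Letter.n3, Letter.n3],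
   [Letter.n4, Letter.n3], [Letter.n1, Letter.D], [Letter.n4, Letter.D]}

/-- The set of words `{13, 23, 33, 43, 1L, 2L}`. -/
def W13L : Set (List Letter) :=
  {[Letter.n1, Letter.n3], [Letter.n2, Letter.n3], [Letter.n3, Letter.n3],
   [Letter.n4, Letter.n3], [Letter.n1, Letter.L], [Letter.n2, Letter.L]}

/-- `M_2 = {UR, UL, DR, DL, RU, RD, LU, LD}`. -/
def M2Set : Set (List Letter) :=
  {[Letter.U, Letter.R], [Letter.U, Letter.L], [Letter.D, Letter.R], [Letter.D, Letter.L],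
   [Letter.R, Letter.U], [Letter.R, Letter.D], [Letter.L, Letter.U], [Letter.L, Letter.D]}

/-- `E^s_π`: the words `φ(u)` for `u ∈ P(π)` strict. -/
def EsSet {n : ℕ} (π : Equiv.Perm (Fin n)) : Set (List Letter) :=
  { v | ∃ u ∈ PinWords π, IsStrict u ∧ v ∈ phiSet u }

/-- `E^qs_π`: the words `φ(u^(2))` for `u = u^(1)u^(2) ∈ P(π)` quasi-strict. -/
def EqsSet {n : ℕ} (π : Equiv.Perm (Fin n)) : Set (List Letter) :=
  { v | ∃ u ∈ PinWords π, IsQuasiStrict u ∧ ∃ u1 u2, IsSNLD u [u1, u2] ∧ v ∈ phiSet u2 }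


/-- Abstract one-coordinate version of a separating line condition. -/
def LSep (y : ℕ → ℝ) (i : ℕ) : Prop :=
  (y (i - 1) < y i ∧ ∀ j < i - 1, y i < y j) ∨
  (y i < y (i - 1) ∧ ∀ j < i - 1, y j < y i)

lemma lsep_above (y : ℕ → ℝ) (i : ℕ) (hi : 2 ≤ i) (hs : LSep y i)
    (hab : ∀ j < i - 1, y j < y (i - 1)) : ∀ j < i - 1, y j < y i := by
  rcases hs with ⟨h1, h2⟩ | ⟨h1, h2⟩
  · exfalso
    have a1 := h2 0 (by omega)
    have a2 := hab 0 (by omega)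
    linarith
  · exact h2

lemma lsep_below (y : ℕ → ℝ) (i : ℕ) (hi : 2 ≤ i) (hs : LSep y i)
    (hab : ∀ j < i - 1, y (i - 1) < y j) : ∀ j < i - 1, y i < y j := by
  rcases hs with ⟨h1, h2⟩ | ⟨h1, h2⟩
  · exact h2
  · exfalso
    have a1 := h2 0 (by omega)
    have a2 := hab 0 (by omega)
    linarith

lemma not_lsep_right (x : ℕ → ℝ) (i : ℕ) (hi : 2 ≤ i)
    (hr : ∀ j < i, x j < x i) : ¬ LSep x i := by
  rintro (⟨h1, h2⟩ | ⟨h1, h2⟩)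
  · have a1 := h2 0 (by omega)
    have a2 := hr 0 (by omega)
    linarith
  · have a1 := hr (i - 1) (by omega)
    linarith

lemma not_lsep_left (x : ℕ → ℝ) (i : ℕ) (hi : 2 ≤ i)
    (hl : ∀ j < i, x i < x j) : ¬ LSep x i := by
  rintro (⟨h1, h2⟩ | ⟨h1, h2⟩)
  · have a1 := hl (i - 1) (by omega)
    linarith
  · have a1 := h2 0 (by omega)
    have a2 := hl 0 (by omega)
    linarith

lemma not_lsep_of_prev (y : ℕ → ℝ) (i : ℕ) (hi : 3 ≤ i)
    (hp : LSep y (i - 1)) : ¬ LSep y i := by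
  obtain ⟨j1, hj1, j2, hj2, hl1, hl2⟩ :
      ∃ j1 < i - 1, ∃ j2 < i - 1, y j1 < y (i - 1) ∧ y (i - 1) < y j2 := by
    rcases hp with ⟨h1, h2⟩ | ⟨h1, h2⟩
    · exact ⟨i - 1 - 1, by omega, 0, by omega, h1, h2 0 (by omega)⟩
    · exact ⟨0, by omega, i - 1 - 1, by omega, h2 0 (by omega), h1⟩
  rintro (⟨h1, h2⟩ | ⟨h1, h2⟩)
  · have a1 := h2 j1 hj1
    linarith
  · have a1 := h2 j2 hj2
    linarith

lemma quad_unique (q : ℕ → Point) (i m : ℕ) (hm : 0 < m) (c c' : Letter)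
    (h : InQuadOf q i m c) (h' : InQuadOf q i m c') : c = c' := by
  cases c <;> cases c' <;>
    first
      | rfl
      | exact h.elim
      | exact h'.elim
      | (exfalso
         obtain ⟨h1, h2⟩ := h
         obtain ⟨h1', h2'⟩ := h'
         have a1 := h1 0 hm
         have a2 := h2 0 hm
         have b1 := h1' 0 hm
         have b2 := h2' 0 hm
         linarith)

/-- For a pin word `w` of length `n ≥ 2` read along a pin sequence
`(p_0, p_1, …, p_n)`, every pin `p_i` with `2 ≤ i ≤ n` lies in exactly one quadrant of
the bounding box of `{p_0, …, p_(i-2)}`, whose numeral is `w_i` if `w_i` is a numeral,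
`φ⁻¹(w_(i-1) w_i)` if both are directions, and `φ⁻¹(BC)` with `φ(w_(i-1) w_i) = ABC`
otherwise. -/
theorem statement_2 (w : List Letter) (hpw : IsPinWord w) (hlen : 2 ≤ w.length)
    (q : ℕ → Point) (hseq : IsPinSeq q (w.length + 1))
    (hword : WordOf q w.length w) :
    ∀ i, 2 ≤ i → i ≤ w.length →
      InQuadOf q i (i - 1)
        (if (w.getD (i - 1) Letter.U).isNum then w.getD (i - 1) Letter.U
         else quadNum (w.getD (i - 2) Letter.U) (w.getD (i - 1) Letter.U)) ∧
      ∀ c : Letter, InQuadOf q i (i - 1) c →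
        c = (if (w.getD (i - 1) Letter.U).isNum then w.getD (i - 1) Letter.U
             else quadNum (w.getD (i - 2) Letter.U) (w.getD (i - 1) Letter.U)) := by
  intro i hi2 hin
  obtain ⟨hwl, hwlet⟩ := hword
  have hb : LetterIs q i (w.getD (i - 1) Letter.U) := by
    have h := hwlet (i - 1) (by omega)
    rwa [show i - 1 + 1 = i by omega] at h
  have ha : LetterIs q (i - 1) (w.getD (i - 2) Letter.U) := by
    have h := hwlet (i - 2) (by omega)
    rwa [show i - 2 + 1 = i - 1 by omega] at h
  generalize hbg : w.getD (i - 1) Letter.U = b at hb ⊢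
  generalize hag : w.getD (i - 2) Letter.U = a at ha ⊢
  have hm : 0 < i - 1 := by omega
  suffices hex : InQuadOf q i (i - 1) (if b.isNum then b else quadNum a b) by
    exact ⟨hex, fun c hc => quad_unique q i (i - 1) hm c _ hc hex⟩
  clear hag hbg hwlet hwl hseq hpw hlen
  cases b with
  | n1 =>
    obtain ⟨-, hr, hu⟩ := hb
    exact ⟨fun j hj => hr j (by omega), fun j hj => hu j (by omega)⟩
  | n2 =>
    obtain ⟨-, hl, hu⟩ := hb
    exact ⟨fun j hj => hl j (by omega), fun j hj => hu j (by omega)⟩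
  | n3 =>
    obtain ⟨-, hl, hd⟩ := hb
    exact ⟨fun j hj => hl j (by omega), fun j hj => hd j (by omega)⟩
  | n4 =>
    obtain ⟨-, hr, hd⟩ := hb
    exact ⟨fun j hj => hr j (by omega), fun j hj => hd j (by omega)⟩
  | R =>
    obtain ⟨-, hsep, hr⟩ := hb
    have hnv : ¬ VLineSep q i := not_lsep_right (fun j => (q j).1) i hi2 hr
    have hy : LSep (fun j => (q j).2) i := hsep.resolve_left hnv
    have hx : ∀ j < i - 1, (q j).1 < (q i).1 := fun j hj => hr j (by omega)
    cases a with
    | n1 =>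
      obtain ⟨-, -, hab⟩ := ha
      exact ⟨hx, lsep_above _ i hi2 hy hab⟩
    | n2 =>
      obtain ⟨-, -, hab⟩ := ha
      exact ⟨hx, lsep_above _ i hi2 hy hab⟩
    | U =>
      obtain ⟨-, -, hab⟩ := ha
      exact ⟨hx, lsep_above _ i hi2 hy hab⟩
    | n3 =>
      obtain ⟨-, -, hbe⟩ := ha
      exact ⟨hx, lsep_below _ i hi2 hy hbe⟩
    | n4 =>
      obtain ⟨-, -, hbe⟩ := ha
      exact ⟨hx, lsep_below _ i hi2 hy hbe⟩
    | D =>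
      obtain ⟨-, -, hbe⟩ := ha
      exact ⟨hx, lsep_below _ i hi2 hy hbe⟩
    | L =>
      obtain ⟨hi2', hsep', hl⟩ := ha
      have hnv' : ¬ VLineSep q (i - 1) := not_lsep_left (fun j => (q j).1) (i - 1) hi2' hl
      have hy' : LSep (fun j => (q j).2) (i - 1) := hsep'.resolve_left hnv'
      exact absurd hy (not_lsep_of_prev _ i (by omega) hy')
    | R =>
      obtain ⟨hi2', hsep', hr'⟩ := ha
      have hnv' : ¬ VLineSep q (i - 1) := not_lsep_right (fun j => (q j).1) (i - 1) hi2' hr'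
      have hy' : LSep (fun j => (q j).2) (i - 1) := hsep'.resolve_left hnv'
      exact absurd hy (not_lsep_of_prev _ i (by omega) hy')
  | L =>
    obtain ⟨-, hsep, hl⟩ := hb
    have hnv : ¬ VLineSep q i := not_lsep_left (fun j => (q j).1) i hi2 hl
    have hy : LSep (fun j => (q j).2) i := hsep.resolve_left hnv
    have hx : ∀ j < i - 1, (q i).1 < (q j).1 := fun j hj => hl j (by omega)
    cases a with
    | n1 =>
      obtain ⟨-, -, hab⟩ := ha
      exact ⟨hx, lsep_above _ i hi2 hy hab⟩
    | n2 =>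
      obtain ⟨-, -, hab⟩ := ha
      exact ⟨hx, lsep_above _ i hi2 hy hab⟩
    | U =>
      obtain ⟨-, -, hab⟩ := ha
      exact ⟨hx, lsep_above _ i hi2 hy hab⟩
    | n3 =>
      obtain ⟨-, -, hbe⟩ := ha
      exact ⟨hx, lsep_below _ i hi2 hy hbe⟩
    | n4 =>
      obtain ⟨-, -, hbe⟩ := ha
      exact ⟨hx, lsep_below _ i hi2 hy hbe⟩
    | D =>
      obtain ⟨-, -, hbe⟩ := ha
      exact ⟨hx, lsep_below _ i hi2 hy hbe⟩
    | L =>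
      obtain ⟨hi2', hsep', hl'⟩ := ha
      have hnv' : ¬ VLineSep q (i - 1) := not_lsep_left (fun j => (q j).1) (i - 1) hi2' hl'
      have hy' : LSep (fun j => (q j).2) (i - 1) := hsep'.resolve_left hnv'
      exact absurd hy (not_lsep_of_prev _ i (by omega) hy')
    | R =>
      obtain ⟨hi2', hsep', hr'⟩ := ha
      have hnv' : ¬ VLineSep q (i - 1) := not_lsep_right (fun j => (q j).1) (i - 1) hi2' hr'
      have hy' : LSep (fun j => (q j).2) (i - 1) := hsep'.resolve_left hnv'
      exact absurd hy (not_lsep_of_prev _ i (by omega) hy')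
  | U =>
    obtain ⟨-, hsep, hu⟩ := hb
    have hnh : ¬ HLineSep q i := not_lsep_right (fun j => (q j).2) i hi2 hu
    have hxs : LSep (fun j => (q j).1) i := hsep.resolve_right hnh
    have hy : ∀ j < i - 1, (q j).2 < (q i).2 := fun j hj => hu j (by omega)
    cases a with
    | n1 =>
      obtain ⟨-, hab, -⟩ := ha
      exact ⟨lsep_above _ i hi2 hxs hab, hy⟩
    | n4 =>
      obtain ⟨-, hab, -⟩ := ha
      exact ⟨lsep_above _ i hi2 hxs hab, hy⟩
    | R =>
      obtain ⟨-, -, hab⟩ := ha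
      exact ⟨lsep_above _ i hi2 hxs hab, hy⟩
    | n2 =>
      obtain ⟨-, hbe, -⟩ := ha
      exact ⟨lsep_below _ i hi2 hxs hbe, hy⟩
    | n3 =>
      obtain ⟨-, hbe, -⟩ := ha
      exact ⟨lsep_below _ i hi2 hxs hbe, hy⟩
    | L =>
      obtain ⟨-, -, hbe⟩ := ha
      exact ⟨lsep_below _ i hi2 hxs hbe, hy⟩
    | U =>
      obtain ⟨hi2', hsep', hu'⟩ := ha
      have hnh' : ¬ HLineSep q (i - 1) := not_lsep_right (fun j => (q j).2) (i - 1) hi2' hu'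
      have hx' : LSep (fun j => (q j).1) (i - 1) := hsep'.resolve_right hnh'
      exact absurd hxs (not_lsep_of_prev _ i (by omega) hx')
    | D =>
      obtain ⟨hi2', hsep', hd'⟩ := ha
      have hnh' : ¬ HLineSep q (i - 1) := not_lsep_left (fun j => (q j).2) (i - 1) hi2' hd'
      have hx' : LSep (fun j => (q j).1) (i - 1) := hsep'.resolve_right hnh'
      exact absurd hxs (not_lsep_of_prev _ i (by omega) hx')
  | D =>
    obtain ⟨-, hsep, hd⟩ := hb
    have hnh : ¬ HLineSep q i := not_lsep_left (fun j => (q j).2) i hi2 hd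
    have hxs : LSep (fun j => (q j).1) i := hsep.resolve_right hnh
    have hy : ∀ j < i - 1, (q i).2 < (q j).2 := fun j hj => hd j (by omega)
    cases a with
    | n1 =>
      obtain ⟨-, hab, -⟩ := ha
      exact ⟨lsep_above _ i hi2 hxs hab, hy⟩
    | n4 =>
      obtain ⟨-, hab, -⟩ := ha
      exact ⟨lsep_above _ i hi2 hxs hab, hy⟩
    | R =>
      obtain ⟨-, -, hab⟩ := ha
      exact ⟨lsep_above _ i hi2 hxs hab, hy⟩
    | n2 =>
      obtain ⟨-, hbe, -⟩ := ha
      exact ⟨lsep_below _ i hi2 hxs hbe, hy⟩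
    | n3 =>
      obtain ⟨-, hbe, -⟩ := ha
      exact ⟨lsep_below _ i hi2 hxs hbe, hy⟩
    | L =>
      obtain ⟨-, -, hbe⟩ := ha
      exact ⟨lsep_below _ i hi2 hxs hbe, hy⟩
    | U =>
      obtain ⟨hi2', hsep', hu'⟩ := ha
      have hnh' : ¬ HLineSep q (i - 1) := not_lsep_right (fun j => (q j).2) (i - 1) hi2' hu'
      have hx' : LSep (fun j => (q j).1) (i - 1) := hsep'.resolve_right hnh'
      exact absurd hxs (not_lsep_of_prev _ i (by omega) hx')
    | D =>
      obtain ⟨hi2', hsep', hd'⟩ := ha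
      have hnh' : ¬ HLineSep q (i - 1) := not_lsep_left (fun j => (q j).2) (i - 1) hi2' hd'
      have hx' : LSep (fun j => (q j).1) (i - 1) := hsep'.resolve_right hnh'
      exact absurd hxs (not_lsep_of_prev _ i (by omega) hx')

end PinStmt
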